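/- arXiv:2010.14682 — 3 statements merged into one kernel-verified Lean document; each statement's English description precedes it below -/
import Mathlib

section
/- Let m_1, ..., m_{p-1} be D×D complex matrices. The following are equivalent: (1) the (unital or non-unital) subalgebra of Mat(D,D) generated by m_1,...,m_{p-1} under addition and multiplication is all of Mat(D,D); (2) every linear subspace W of Mat(D,D) that contains an invertible matrix and satisfies m_q W ⊆ W for all q equals Mat(D,D). -/
open Matrix BigOperators

/-- Burnside-type theorem on `Mat(D,D)`: the algebra generated by the `m q`
is all of `Mat(D,D)` iff every linear subspace `W` of `Mat(D,D)` containing an invertible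
matrix and invariant under left multiplication by every `m q` equals `Mat(D,D)`. -/
theorem stmt2 {D : ℕ} {ι : Type*} [Fintype ι] (m : ι → Matrix (Fin D) (Fin D) ℂ) :
    Algebra.adjoin ℂ (Set.range m) = ⊤ ↔
      ∀ W : Submodule ℂ (Matrix (Fin D) (Fin D) ℂ),
        (∃ B ∈ W, IsUnit B) → (∀ (q : ι), ∀ w ∈ W, m q * w ∈ W) → W = ⊤ := by
  constructor
  · intro h W ⟨B, hBW, hBu⟩ hinv
    have key : ∀ a ∈ Algebra.adjoin ℂ (Set.range m),
        ∀ w ∈ W, a * w ∈ W := by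
      intro a ha
      induction ha using Algebra.adjoin_induction with
      | mem s hs =>
        obtain ⟨q, rfl⟩ := hs
        exact hinv q
      | algebraMap c =>
        intro w hw
        have : (algebraMap ℂ _ c) * w = c • w := by
          simp [Algebra.smul_def]
        rw [this]
        exact W.smul_mem c hw
      | add x y hx hy ihx ihy =>
        intro w hw
        rw [add_mul]
        exact W.add_mem (ihx w hw) (ihy w hw)
      | mul x y hx hy ihx ihy =>
        intro w hw
        rw [mul_assoc]
        exact ihx _ (ihy w hw)
    rw [eq_top_iff]
    intro A _
    obtain ⟨u, rfl⟩ := hBu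
    have hA : A = (A * (↑u⁻¹ : Matrix (Fin D) (Fin D) ℂ)) * (↑u : Matrix (Fin D) (Fin D) ℂ) := by
      rw [mul_assoc, Units.inv_mul, mul_one]
    rw [hA]
    exact key _ (by rw [h]; trivial) _ hBW
  · intro h
    have := h (Subalgebra.toSubmodule (Algebra.adjoin ℂ (Set.range m)))
      ⟨1, Subalgebra.one_mem _, isUnit_one⟩
      (fun q w hw => (Algebra.adjoin ℂ (Set.range m)).mul_mem (Algebra.subset_adjoin ⟨q, rfl⟩) hw)
    rwa [Algebra.toSubmodule_eq_top] at this
end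

section
/- Let E_1, ..., E_p be D×D complex matrices with p > 2 such that E_p is invertible and the matrices E_p^{-1}E_1, ..., E_p^{-1}E_{p-1} generate the full matrix algebra Mat(D,D) under addition and multiplication. Then for any finite set of D×D matrices {T_j} containing an invertible element and whose linear span is a proper subspace of Mat(D,D), the span of the products {E_i T_j : 1 ≤ i ≤ p} has strictly larger dimension than the span of {T_j}. -/
open Matrix BigOperators

set_option maxHeartbeats 1000000 in
/-- if `E_p` is invertible and `E_p⁻¹E_1, …, E_p⁻¹E_{p-1}` generate the full
matrix algebra, then left multiplication by the family `{E_i}` strictly increases the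
dimension of the span of any family `{T_j}` containing an invertible element whose span is
a proper subspace of `Mat(D,D)`. -/
theorem stmt3 {D p : ℕ} (hp : 2 < p + 1) (E : Fin (p + 1) → Matrix (Fin D) (Fin D) ℂ)
    (hEp : IsUnit (E (Fin.last p)))
    (hgen : Algebra.adjoin ℂ
      (Set.range fun i : Fin p => (E (Fin.last p))⁻¹ * E i.castSucc) = ⊤)
    {ι : Type*} [Fintype ι] (T : ι → Matrix (Fin D) (Fin D) ℂ)
    (hinv : ∃ j, IsUnit (T j))
    (hprop : Submodule.span ℂ (Set.range T) ≠ ⊤) :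
    Module.finrank ℂ (Submodule.span ℂ (Set.range T)) <
      Module.finrank ℂ
        (Submodule.span ℂ (Set.range fun q : Fin (p + 1) × ι => E q.1 * T q.2)) := by
  classical
  set A := E (Fin.last p) with hA
  have hdet : IsUnit A.det := (Matrix.isUnit_iff_isUnit_det A).mp hEp
  set V := Submodule.span ℂ (Set.range T) with hV
  set W := Submodule.span ℂ (Set.range fun q : Fin (p + 1) × ι => E q.1 * T q.2) with hW
  let e : Matrix (Fin D) (Fin D) ℂ ≃ₗ[ℂ] Matrix (Fin D) (Fin D) ℂ :=
    LinearEquiv.ofLinear (LinearMap.mulLeft ℂ A) (LinearMap.mulLeft ℂ A⁻¹)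
      (LinearMap.ext fun X => by
        simp [LinearMap.mulLeft_apply, ← Matrix.mul_assoc,
          Matrix.mul_nonsing_inv A hdet])
      (LinearMap.ext fun X => by
        simp [LinearMap.mulLeft_apply, ← Matrix.mul_assoc,
          Matrix.nonsing_inv_mul A hdet])
  have hmapE : ∀ i : Fin (p + 1),
      Submodule.map (LinearMap.mulLeft ℂ (E i)) V ≤ W := by
    intro i
    rw [hV, Submodule.map_span]
    apply Submodule.span_le.mpr
    rintro _ ⟨_, ⟨j, rfl⟩, rfl⟩
    exact Submodule.subset_span ⟨(i, j), rfl⟩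
  have key1 : Module.finrank ℂ (Submodule.map e.toLinearMap V) = Module.finrank ℂ V :=
    LinearEquiv.finrank_map_eq e V
  have heV : Submodule.map e.toLinearMap V = Submodule.map (LinearMap.mulLeft ℂ A) V := rfl
  by_contra hcon
  push_neg at hcon
  have hle : Submodule.map e.toLinearMap V ≤ W := heV ▸ hmapE (Fin.last p)
  have heq : Submodule.map e.toLinearMap V = W :=
    Submodule.eq_of_le_of_finrank_le hle (by rw [key1]; exact hcon)
  -- Invariance subalgebra
  let S' : Subalgebra ℂ (Matrix (Fin D) (Fin D) ℂ) :=
    { carrier := {x | ∀ v ∈ V, x * v ∈ V}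
      mul_mem' := fun {x y} hx hy v hv => by
        rw [mul_assoc]; exact hx _ (hy v hv)
      add_mem' := fun {x y} hx hy v hv => by
        rw [add_mul]; exact V.add_mem (hx v hv) (hy v hv)
      algebraMap_mem' := fun c v hv => by
        rw [← Algebra.smul_def]; exact V.smul_mem c hv }
  have hgenS : ∀ i : Fin p, A⁻¹ * E i.castSucc ∈ S' := by
    intro i v hv
    have h1 : E i.castSucc * v ∈ W := hmapE i.castSucc ⟨v, hv, rfl⟩
    rw [← heq] at h1
    obtain ⟨w, hw, hew⟩ := h1
    have hwe : A⁻¹ * (E i.castSucc * v) = w := by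
      rw [← hew]
      show A⁻¹ * (A * w) = w
      rw [← Matrix.mul_assoc, Matrix.nonsing_inv_mul A hdet, Matrix.one_mul]
    show A⁻¹ * E i.castSucc * v ∈ V
    rw [Matrix.mul_assoc, hwe]
    exact hw
  have hall : ∀ x : Matrix (Fin D) (Fin D) ℂ, x ∈ S' := by
    intro x
    have h1 : Algebra.adjoin ℂ
        (Set.range fun i : Fin p => A⁻¹ * E i.castSucc) ≤ S' := by
      apply Algebra.adjoin_le
      rintro _ ⟨i, rfl⟩
      exact hgenS i
    have := hgen ▸ h1
    exact this (by trivial)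
  apply hprop
  obtain ⟨j, hTj⟩ := hinv
  have hTdet : IsUnit (T j).det := (Matrix.isUnit_iff_isUnit_det _).mp hTj
  rw [eq_top_iff]
  intro B _
  have hB : B = (B * (T j)⁻¹) * T j := by
    rw [Matrix.mul_assoc, Matrix.nonsing_inv_mul _ hTdet, Matrix.mul_one]
  rw [hB]
  exact hall (B * (T j)⁻¹) (T j) (Submodule.subset_span ⟨j, rfl⟩)
end

section
/- Every linear map φ from d×d complex matrices to d'×d' complex matrices satisfies ‖φ‖_cb ≤ d·‖φ‖_{1→1}, where ‖φ‖_{1→1} = sup_{X≠0} ‖φ(X)‖_1/‖X‖_1 is the trace-norm-to-trace-norm operator norm and ‖φ‖_cb = sup_k sup_{X≠0} ‖(φ⊗id_k)(X)‖_1/‖X‖_1 is the completely bounded (diamond-type) 1→1 norm, where id_k is the identity map on k×k matrices. -/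
/-!
Through a singular value decomposition, the trace norm is the supremum of `|tr (A B)|` over
contractions `A`; hence it is subadditive, absolutely homogeneous, at most `‖x‖ ‖y‖` on a rank-one
matrix `x y*`, and submultiplicative on Kronecker products. Splitting `X` into `k × k` blocks
`X_{cc'}` gives `(id ⊗ φ) X = ∑ X_{cc'} ⊗ φ (E_{cc'})`, so
`‖(id ⊗ φ) X‖₁ ≤ ‖φ‖_{1→1} ∑ ‖X_{cc'}‖₁`. For a rank-one `X = x y*` the blocks are `x_c y_{c'}*`,
and Cauchy–Schwarz gives `∑_c ‖x_c‖ ≤ √d ‖x‖` on each side; summing over the singular value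
decomposition of `X` yields `∑ ‖X_{cc'}‖₁ ≤ d ‖X‖₁`.
-/
open Matrix BigOperators Kronecker ComplexOrder

/-- The old Mathlib `Matrix.PosSemidef.sqrt` (removed since), with its old definition. -/
noncomputable def Matrix.PosSemidef.sqrt {n : Type*} [Fintype n] [DecidableEq n] {A : Matrix n n ℂ}
    (hA : A.PosSemidef) : Matrix n n ℂ :=
  hA.1.eigenvectorUnitary.1 * diagonal ((↑) ∘ (√·) ∘ hA.1.eigenvalues) *
    (star hA.1.eigenvectorUnitary : Matrix n n ℂ)

noncomputable def trNorm {n : Type*} [Fintype n] [DecidableEq n] (M : Matrix n n ℂ) : ℝ :=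
  ((Matrix.posSemidef_conjTranspose_mul_self M).sqrt.trace).re

noncomputable def mlog {n : Type*} [Fintype n] [DecidableEq n] (M : Matrix n n ℂ) : Matrix n n ℂ :=
  if h : M.IsHermitian then
    (h.eigenvectorUnitary : Matrix n n ℂ) *
      Matrix.diagonal (fun i => (Real.log (h.eigenvalues i) : ℂ)) *
      (star (h.eigenvectorUnitary : Matrix n n ℂ))
  else 0

noncomputable def vnEnt {n : Type*} [Fintype n] [DecidableEq n] (ρ : Matrix n n ℂ) : ℝ :=
  -(((ρ * mlog ρ).trace).re)

noncomputable def relEnt {n : Type*} [Fintype n] [DecidableEq n] (ρ σ : Matrix n n ℂ) : ℝ :=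
  (((ρ * (mlog ρ - mlog σ)).trace).re)

def IsState {n : Type*} [Fintype n] (ρ : Matrix n n ℂ) : Prop := ρ.PosSemidef ∧ ρ.trace = 1

noncomputable def ptraceL {α n : Type*} [Fintype α] (M : Matrix (α × n) (α × n) ℂ) : Matrix n n ℂ :=
  Matrix.of fun i j => ∑ a, M (a, i) (a, j)

noncomputable def ptraceR {α n : Type*} [Fintype n] (M : Matrix (α × n) (α × n) ℂ) : Matrix α α ℂ :=
  Matrix.of fun i j => ∑ c, M (i, c) (j, c)

noncomputable def amp {α γ δ : Type*} (Φ : Matrix γ γ ℂ → Matrix δ δ ℂ)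
    (ρ : Matrix (α × γ) (α × γ) ℂ) : Matrix (α × δ) (α × δ) ℂ :=
  Matrix.of fun x y => Φ (Matrix.of fun c c' => ρ (x.1, c) (y.1, c')) x.2 y.2

def IsCP {γ δ : Type*} [Fintype γ] [Fintype δ] (Φ : Matrix γ γ ℂ → Matrix δ δ ℂ) : Prop :=
  IsLinearMap ℂ Φ ∧ ∀ (k : ℕ) (ρ : Matrix (Fin k × γ) (Fin k × γ) ℂ), ρ.PosSemidef → (amp Φ ρ).PosSemidef

def IsTP {γ δ : Type*} [Fintype γ] [Fintype δ] (Φ : Matrix γ γ ℂ → Matrix δ δ ℂ) : Prop :=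
  ∀ ρ, (Φ ρ).trace = ρ.trace

section tri
variable {α β γ : Type*} [Fintype α] [Fintype β] [Fintype γ]

noncomputable def mAB (ρ : Matrix ((α × β) × γ) ((α × β) × γ) ℂ) : Matrix (α × β) (α × β) ℂ := ptraceR ρ
noncomputable def mA (ρ : Matrix ((α × β) × γ) ((α × β) × γ) ℂ) : Matrix α α ℂ := ptraceR (mAB ρ)
noncomputable def mB (ρ : Matrix ((α × β) × γ) ((α × β) × γ) ℂ) : Matrix β β ℂ := ptraceL (mAB ρ)
noncomputable def mBC (ρ : Matrix ((α × β) × γ) ((α × β) × γ) ℂ) : Matrix (β × γ) (β × γ) ℂ :=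
  Matrix.of fun p q => ∑ a, ρ ((a, p.1), p.2) ((a, q.1), q.2)

noncomputable def cmi [DecidableEq α] [DecidableEq β] [DecidableEq γ]
    (ρ : Matrix ((α × β) × γ) ((α × β) × γ) ℂ) : ℝ :=
  vnEnt (mAB ρ) + vnEnt (mBC ρ) - vnEnt (mB ρ) - vnEnt ρ

noncomputable def prodA_BC (ρ : Matrix ((α × β) × γ) ((α × β) × γ) ℂ) :
    Matrix ((α × β) × γ) ((α × β) × γ) ℂ :=
  Matrix.of fun x y => mA ρ x.1.1 y.1.1 * mBC ρ (x.1.2, x.2) (y.1.2, y.2)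

noncomputable def prodA_B (ρ : Matrix ((α × β) × γ) ((α × β) × γ) ℂ) : Matrix (α × β) (α × β) ℂ :=
  Matrix.of fun x y => mA ρ x.1 y.1 * mB ρ x.2 y.2

noncomputable def tcmi [DecidableEq α] [DecidableEq β] [DecidableEq γ]
    (ρ : Matrix ((α × β) × γ) ((α × β) × γ) ℂ) : ℝ :=
  trNorm (ρ - prodA_BC ρ) - trNorm (mAB ρ - prodA_B ρ)
end tri

/-- The `1→1` superoperator norm `sup_{X≠0} ‖φ(X)‖₁/‖X‖₁`. -/
noncomputable def norm11 {γ δ : Type*} [Fintype γ] [DecidableEq γ] [Fintype δ] [DecidableEq δ]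
    (φ : Matrix γ γ ℂ → Matrix δ δ ℂ) : ℝ :=
  sSup {c | ∃ X : Matrix γ γ ℂ, X ≠ 0 ∧ c = trNorm (φ X) / trNorm X}

/-- The completely bounded `1→1` norm `sup_k sup_{X≠0} ‖(id_k ⊗ φ)(X)‖₁/‖X‖₁`. -/
noncomputable def normCB {γ δ : Type*} [Fintype γ] [DecidableEq γ] [Fintype δ] [DecidableEq δ]
    (φ : Matrix γ γ ℂ → Matrix δ δ ℂ) : ℝ :=
  sSup {c | ∃ (k : ℕ) (X : Matrix (Fin k × γ) (Fin k × γ) ℂ),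
    X ≠ 0 ∧ c = trNorm (amp φ X) / trNorm X}

open scoped InnerProductSpace

section TraceNorm
variable {n : Type*} [Fintype n] [DecidableEq n]

omit [DecidableEq n] in
lemma inner_toLp_mulVec_mulVec (B : Matrix n n ℂ) (x y : EuclideanSpace ℂ n) :
    ⟪WithLp.toLp 2 (B *ᵥ ⇑x), WithLp.toLp 2 (B *ᵥ ⇑y)⟫_ℂ =
      ⟪x, WithLp.toLp 2 ((Bᴴ * B) *ᵥ ⇑y)⟫_ℂ := by
  simp only [EuclideanSpace.inner_eq_star_dotProduct, star_mulVec, ← mulVec_mulVec]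
  rw [dotProduct_comm, ← dotProduct_mulVec, dotProduct_comm]

lemma OrthonormalBasis.sum_vecMulVec_self {ι : Type*} [Fintype ι]
    (b : OrthonormalBasis ι ℂ (EuclideanSpace ℂ n)) :
    ∑ i, vecMulVec ⇑(b i) (star ⇑(b i)) = 1 := by
  ext a a'
  have := b.sum_inner_mul_inner (EuclideanSpace.single a 1) (EuclideanSpace.single a' 1)
  simp only [EuclideanSpace.inner_single_left, EuclideanSpace.inner_single_right] at this
  simpa [Matrix.sum_apply, vecMulVec_apply, one_apply, eq_comm, mul_comm] using this

lemma trNorm_eq_sum_sqrt_eigenvalues (B : Matrix n n ℂ) :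
    trNorm B = ∑ i, √((isHermitian_conjTranspose_mul_self B).eigenvalues i) := by
  rw [trNorm, PosSemidef.sqrt, trace_mul_cycle, Unitary.coe_star_mul_self, one_mul,
    trace_diagonal, Complex.re_sum]
  rfl

theorem exists_svd (B : Matrix n n ℂ) :
    ∃ (s : n → ℝ) (v w : OrthonormalBasis n ℂ (EuclideanSpace ℂ n)), (∀ i, 0 ≤ s i) ∧
      B = ∑ i, (s i : ℂ) • vecMulVec ⇑(w i) (star ⇑(v i)) ∧ trNorm B = ∑ i, s i := by
  set h := isHermitian_conjTranspose_mul_self B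
  set v := h.eigenvectorBasis
  set s : n → ℝ := fun i => √(h.eigenvalues i)
  set u : n → EuclideanSpace ℂ n := fun i => WithLp.toLp 2 (B *ᵥ ⇑(v i))
  have hs_sq : ∀ i, s i ^ 2 = h.eigenvalues i := fun i =>
    Real.sq_sqrt ((posSemidef_conjTranspose_mul_self B).eigenvalues_nonneg i)
  have hu : ∀ i j, ⟪u i, u j⟫_ℂ = if i = j then ((s i ^ 2 : ℝ) : ℂ) else 0 := by
    intro i j
    rw [inner_toLp_mulVec_mulVec, h.mulVec_eigenvectorBasis, WithLp.toLp_smul, WithLp.toLp_ofLp,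
      inner_smul_right_eq_smul, v.inner_eq_ite, hs_sq]
    split_ifs with hij <;> simp [hij]
  -- Normalising the `u i` gives an orthonormal family on the support of `s`; extend it to a basis.
  set w' : n → EuclideanSpace ℂ n := fun i => (s i : ℂ)⁻¹ • u i
  have hw' : Orthonormal ℂ ({i | s i ≠ 0}.domRestrict w') := by
    rw [orthonormal_iff_ite]
    rintro ⟨i, hi⟩ ⟨j, hj⟩
    simp only [Set.domRestrict_apply, w', inner_smul_left, inner_smul_right, hu, Subtype.mk.injEq]
    split_ifs with hij
    · subst hij
      have : (s i : ℂ) ≠ 0 := by exact_mod_cast hi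
      simp only [map_inv₀, Complex.conj_ofReal, Complex.ofReal_pow]
      field_simp
    · simp
  obtain ⟨w, hw⟩ := hw'.exists_orthonormalBasis_extension_of_card_eq (by simp)
  have hsw : ∀ i, (s i : ℂ) • w i = u i := by
    intro i
    by_cases hi : s i = 0
    · have : u i = 0 := inner_self_eq_zero.mp (by rw [hu]; simp [hi])
      simp [hi, this]
    · rw [hw i hi]
      simp [w', smul_smul, hi]
  refine ⟨s, v, w, fun i => Real.sqrt_nonneg _, ?_, trNorm_eq_sum_sqrt_eigenvalues B⟩
  calc B = B * ∑ i, vecMulVec ⇑(v i) (star ⇑(v i)) := by rw [v.sum_vecMulVec_self, mul_one]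
    _ = _ := by
      simp only [Finset.mul_sum, mul_vecMulVec, ← smul_vecMulVec, ← WithLp.ofLp_smul, hsw]
      rfl

/-- `‖A‖ ≤ 1` in the operator norm, stated through the trace pairing with rank-one matrices. -/
def IsContraction (A : Matrix n n ℂ) : Prop :=
  ∀ x y : EuclideanSpace ℂ n, ‖(A * vecMulVec ⇑x (star ⇑y)).trace‖ ≤ ‖x‖ * ‖y‖

omit [DecidableEq n] in
lemma trace_vecMulVec_mul_vecMulVec (v w x y : EuclideanSpace ℂ n) :
    (vecMulVec ⇑v (star ⇑w) * vecMulVec ⇑x (star ⇑y)).trace = ⟪w, x⟫_ℂ * ⟪y, v⟫_ℂ := by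
  rw [vecMulVec_mul_vecMulVec, trace_vecMulVec, dotProduct_smul, smul_eq_mul,
    EuclideanSpace.inner_eq_star_dotProduct, EuclideanSpace.inner_eq_star_dotProduct,
    dotProduct_comm (star _)]

omit [DecidableEq n] in
lemma isContraction_sum_vecMulVec {ι : Type*} [Fintype ι] {v w : ι → EuclideanSpace ℂ n}
    (hv : Orthonormal ℂ v) (hw : Orthonormal ℂ w) :
    IsContraction (∑ i, vecMulVec ⇑(v i) (star ⇑(w i))) := by
  intro x y
  have bessel : ∀ {u : ι → EuclideanSpace ℂ n}, Orthonormal ℂ u → ∀ z,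
      √(∑ i, ‖⟪u i, z⟫_ℂ‖ ^ 2) ≤ ‖z‖ := fun hu z =>
    (Real.sqrt_le_sqrt (hu.sum_inner_products_le z)).trans_eq (Real.sqrt_sq (norm_nonneg z))
  simp only [Finset.sum_mul, trace_sum, trace_vecMulVec_mul_vecMulVec]
  calc ‖∑ i, ⟪w i, x⟫_ℂ * ⟪y, v i⟫_ℂ‖ ≤ ∑ i, ‖⟪w i, x⟫_ℂ‖ * ‖⟪v i, y⟫_ℂ‖ :=
        (norm_sum_le _ _).trans_eq (by simp only [norm_mul, norm_inner_symm])
    _ ≤ √(∑ i, ‖⟪w i, x⟫_ℂ‖ ^ 2) * √(∑ i, ‖⟪v i, y⟫_ℂ‖ ^ 2) :=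
        Real.sum_mul_le_sqrt_mul_sqrt _ _ _
    _ ≤ ‖x‖ * ‖y‖ := mul_le_mul (bessel hw x) (bessel hv y) (Real.sqrt_nonneg _) (norm_nonneg _)

lemma exists_isContraction_trace_mul_eq_trNorm (B : Matrix n n ℂ) :
    ∃ A, IsContraction A ∧ (A * B).trace = (trNorm B : ℂ) := by
  obtain ⟨s, v, w, -, hB, htr⟩ := exists_svd B
  refine ⟨∑ i, vecMulVec ⇑(v i) (star ⇑(w i)),
    isContraction_sum_vecMulVec v.orthonormal w.orthonormal, ?_⟩
  rw [htr, hB]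
  simp [Finset.mul_sum, Finset.sum_mul, trace_sum, trace_vecMulVec_mul_vecMulVec, v.inner_eq_ite,
    w.inner_eq_ite]

lemma IsContraction.norm_trace_mul_le {A : Matrix n n ℂ} (hA : IsContraction A)
    (B : Matrix n n ℂ) : ‖(A * B).trace‖ ≤ trNorm B := by
  obtain ⟨s, v, w, hs, hB, htr⟩ := exists_svd B
  rw [htr, hB, Finset.mul_sum, trace_sum]
  refine (norm_sum_le _ _).trans (Finset.sum_le_sum fun i _ => ?_)
  rw [Matrix.mul_smul, trace_smul, smul_eq_mul, norm_mul, Complex.norm_of_nonneg (hs i)]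
  calc s i * ‖(A * vecMulVec ⇑(w i) (star ⇑(v i))).trace‖ ≤ s i * (‖w i‖ * ‖v i‖) :=
        mul_le_mul_of_nonneg_left (hA _ _) (hs i)
    _ = s i := by simp [w.norm_eq_one, v.norm_eq_one]

lemma trNorm_le_of_forall_isContraction {B : Matrix n n ℂ} {c : ℝ}
    (h : ∀ A, IsContraction A → ‖(A * B).trace‖ ≤ c) : trNorm B ≤ c := by
  obtain ⟨A, hA, hAB⟩ := exists_isContraction_trace_mul_eq_trNorm B
  have := h A hA
  rw [hAB, Complex.norm_real, Real.norm_eq_abs] at this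
  exact (le_abs_self _).trans this

lemma trNorm_nonneg (B : Matrix n n ℂ) : 0 ≤ trNorm B := by
  obtain ⟨s, -, -, hs, -, htr⟩ := exists_svd B
  exact htr ▸ Finset.sum_nonneg fun i _ => hs i

lemma trNorm_pos {B : Matrix n n ℂ} (hB : B ≠ 0) : 0 < trNorm B := by
  obtain ⟨s, v, w, hs, hB', htr⟩ := exists_svd B
  refine (trNorm_nonneg B).lt_of_ne fun h0 => hB ?_
  have hs0 : ∀ i, s i = 0 := fun i =>
    (Finset.sum_eq_zero_iff_of_nonneg fun j _ => hs j).mp (htr ▸ h0.symm) i (Finset.mem_univ i)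
  simp [hB', hs0]

lemma norm_apply_le_trNorm (B : Matrix n n ℂ) (a b : n) : ‖B a b‖ ≤ trNorm B := by
  obtain ⟨s, v, w, hs, hB, htr⟩ := exists_svd B
  rw [htr, hB, Matrix.sum_apply]
  refine (norm_sum_le _ _).trans (Finset.sum_le_sum fun i _ => ?_)
  have hw := (PiLp.norm_apply_le (w i) a).trans_eq (w.norm_eq_one i)
  have hv := (PiLp.norm_apply_le (v i) b).trans_eq (v.norm_eq_one i)
  simp only [Matrix.smul_apply, vecMulVec_apply, Pi.star_apply, smul_eq_mul, norm_mul, norm_star,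
    Complex.norm_of_nonneg (hs i)]
  calc s i * (‖w i a‖ * ‖v i b‖) ≤ s i * (1 * 1) :=
        mul_le_mul_of_nonneg_left (mul_le_mul hw hv (norm_nonneg _) zero_le_one) (hs i)
    _ = s i := by ring

lemma trNorm_sum_le {ι : Type*} (t : Finset ι) (B : ι → Matrix n n ℂ) :
    trNorm (∑ i ∈ t, B i) ≤ ∑ i ∈ t, trNorm (B i) :=
  trNorm_le_of_forall_isContraction fun A hA => by
    rw [Finset.mul_sum, trace_sum]
    exact (norm_sum_le _ _).trans (Finset.sum_le_sum fun i _ => hA.norm_trace_mul_le (B i))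

lemma trNorm_smul_le (c : ℂ) (B : Matrix n n ℂ) : trNorm (c • B) ≤ ‖c‖ * trNorm B :=
  trNorm_le_of_forall_isContraction fun A hA => by
    rw [Matrix.mul_smul, trace_smul, smul_eq_mul, norm_mul]
    exact mul_le_mul_of_nonneg_left (hA.norm_trace_mul_le B) (norm_nonneg c)

lemma trNorm_zero : trNorm (0 : Matrix n n ℂ) = 0 :=
  le_antisymm (by simpa using trNorm_smul_le 0 (0 : Matrix n n ℂ)) (trNorm_nonneg 0)

lemma trNorm_vecMulVec_le (x y : EuclideanSpace ℂ n) :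
    trNorm (vecMulVec ⇑x (star ⇑y)) ≤ ‖x‖ * ‖y‖ :=
  trNorm_le_of_forall_isContraction fun _ hA => hA x y

lemma trNorm_sum_smul_vecMulVec_le {ι : Type*} (t : Finset ι) (c : ι → ℂ)
    (x y : ι → EuclideanSpace ℂ n) :
    trNorm (∑ i ∈ t, c i • vecMulVec ⇑(x i) (star ⇑(y i))) ≤ ∑ i ∈ t, ‖c i‖ * (‖x i‖ * ‖y i‖) :=
  (trNorm_sum_le _ _).trans <| Finset.sum_le_sum fun _ _ =>
    (trNorm_smul_le _ _).trans <| mul_le_mul_of_nonneg_left (trNorm_vecMulVec_le _ _) (norm_nonneg _)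

lemma trNorm_single_one_le (a b : n) : trNorm (single a b (1 : ℂ)) ≤ 1 := by
  have := trNorm_vecMulVec_le (EuclideanSpace.single a (1 : ℂ)) (EuclideanSpace.single b 1)
  simpa [single_eq_single_vecMulVec_single] using this

end TraceNorm

section Kronecker
variable {α β : Type*} [Fintype α] [Fintype β]

lemma EuclideanSpace.norm_toLp_mul (x : EuclideanSpace ℂ α) (y : EuclideanSpace ℂ β) :
    ‖WithLp.toLp 2 (fun p : α × β => x p.1 * y p.2)‖ = ‖x‖ * ‖y‖ := by
  simp only [EuclideanSpace.norm_eq, Fintype.sum_prod_type, norm_mul, mul_pow,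
    ← Finset.sum_mul_sum]
  exact Real.sqrt_mul (Finset.sum_nonneg fun _ _ => sq_nonneg _) _

lemma EuclideanSpace.sum_norm_slice_le (x : EuclideanSpace ℂ (α × β)) :
    ∑ b, ‖WithLp.toLp 2 (fun a => x (a, b))‖ ≤ √(Fintype.card β) * ‖x‖ := by
  have hsq : ∑ b, ‖WithLp.toLp 2 (fun a => x (a, b))‖ ^ 2 = ‖x‖ ^ 2 := by
    simp only [EuclideanSpace.norm_sq_eq, Fintype.sum_prod_type]
    exact Finset.sum_comm
  simpa [hsq] using Real.sum_mul_le_sqrt_mul_sqrt Finset.univ (fun _ => (1 : ℝ))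
    (fun b => ‖WithLp.toLp 2 (fun a => x (a, b))‖)

variable [DecidableEq α] [DecidableEq β]

lemma trNorm_kronecker_le (B : Matrix α α ℂ) (C : Matrix β β ℂ) :
    trNorm (B ⊗ₖ C) ≤ trNorm B * trNorm C := by
  obtain ⟨s, v, w, hs, hB, hsB⟩ := exists_svd B
  obtain ⟨t, v', w', ht, hC, htC⟩ := exists_svd C
  let tensor (x : EuclideanSpace ℂ α) (y : EuclideanSpace ℂ β) : EuclideanSpace ℂ (α × β) :=
    WithLp.toLp 2 (fun p => x p.1 * y p.2)
  have hBC : B ⊗ₖ C = ∑ p : α × β, ((s p.1 * t p.2 : ℝ) : ℂ) •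
      vecMulVec ⇑(tensor (w p.1) (w' p.2)) (star ⇑(tensor (v p.1) (v' p.2))) := by
    ext ⟨a, b⟩ ⟨a', b'⟩
    simp only [hB, hC, tensor, kroneckerMap_apply, Matrix.sum_apply, Matrix.smul_apply,
      vecMulVec_apply, Pi.star_apply, RCLike.star_def, Complex.real_smul, Complex.coe_smul,
      Finset.sum_mul_sum, Complex.ofReal_mul, star_mul', smul_eq_mul, Fintype.sum_prod_type]
    exact Finset.sum_congr rfl fun i _ => Finset.sum_congr rfl fun j _ => by ring
  rw [hBC, hsB, htC, Finset.sum_mul_sum, ← Finset.sum_product']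
  refine (trNorm_sum_smul_vecMulVec_le _ _ _ _).trans_eq (Finset.sum_congr rfl fun p _ => ?_)
  simp [tensor, EuclideanSpace.norm_toLp_mul, OrthonormalBasis.norm_eq_one, abs_of_nonneg (hs _),
    abs_of_nonneg (ht _)]

lemma sum_trNorm_submatrix_le (X : Matrix (α × β) (α × β) ℂ) :
    ∑ b, ∑ b', trNorm (X.submatrix (·, b) (·, b')) ≤ Fintype.card β * trNorm X := by
  obtain ⟨s, v, w, hs, hX, htr⟩ := exists_svd X
  let slice (x : EuclideanSpace ℂ (α × β)) (b : β) : EuclideanSpace ℂ α :=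
    WithLp.toLp 2 (fun a => x (a, b))
  have hsub : ∀ b b', X.submatrix (·, b) (·, b') =
      ∑ i, (s i : ℂ) • vecMulVec ⇑(slice (w i) b) (star ⇑(slice (v i) b')) := by
    intro b b'
    ext a a'
    simp [hX, slice, Matrix.sum_apply, vecMulVec_apply]
  calc ∑ b, ∑ b', trNorm (X.submatrix (·, b) (·, b'))
      ≤ ∑ b, ∑ b', ∑ i, s i * (‖slice (w i) b‖ * ‖slice (v i) b'‖) := by
        gcongr with b _ b' _
        rw [hsub]
        exact (trNorm_sum_smul_vecMulVec_le _ _ _ _).trans_eq (by simp [abs_of_nonneg (hs _)])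
    _ = ∑ i, s i * ((∑ b, ‖slice (w i) b‖) * ∑ b', ‖slice (v i) b'‖) := by
        simp_rw [Finset.sum_mul_sum, Finset.mul_sum]
        exact (Finset.sum_congr rfl fun b _ => Finset.sum_comm).trans Finset.sum_comm
    _ ≤ ∑ i, s i * ((√(Fintype.card β) * ‖w i‖) * (√(Fintype.card β) * ‖v i‖)) := by
        gcongr with i _
        · exact hs i
        · exact EuclideanSpace.sum_norm_slice_le _
        · exact EuclideanSpace.sum_norm_slice_le _
    _ = Fintype.card β * trNorm X := by
        rw [htr, Finset.mul_sum]
        simp [OrthonormalBasis.norm_eq_one, mul_comm]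

end Kronecker

section CompletelyBounded
variable {γ δ : Type*} [Fintype γ] [DecidableEq γ]

lemma map_eq_sum_smul_single (φ : Matrix γ γ ℂ →ₗ[ℂ] Matrix δ δ ℂ) (X : Matrix γ γ ℂ) :
    φ X = ∑ c, ∑ c', X c c' • φ (single c c' 1) := by
  conv_lhs => rw [matrix_eq_sum_single X]
  simp [map_sum, ← map_smul]

lemma amp_eq_sum_kronecker {α : Type*} (φ : Matrix γ γ ℂ →ₗ[ℂ] Matrix δ δ ℂ)
    (X : Matrix (α × γ) (α × γ) ℂ) :
    amp φ X = ∑ c, ∑ c', X.submatrix (·, c) (·, c') ⊗ₖ φ (single c c' 1) := by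
  ext ⟨a, e⟩ ⟨a', e'⟩
  rw [amp, of_apply, map_eq_sum_smul_single]
  simp only [Matrix.sum_apply, Matrix.smul_apply, of_apply, kroneckerMap_apply, submatrix_apply,
    smul_eq_mul]

variable [Fintype δ] [DecidableEq δ]

lemma norm11_nonneg (φ : Matrix γ γ ℂ → Matrix δ δ ℂ) : 0 ≤ norm11 φ :=
  Real.sSup_nonneg <| by
    rintro _ ⟨X, -, rfl⟩
    exact div_nonneg (trNorm_nonneg _) (trNorm_nonneg _)

lemma bddAbove_norm11 (φ : Matrix γ γ ℂ →ₗ[ℂ] Matrix δ δ ℂ) :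
    BddAbove {c | ∃ X : Matrix γ γ ℂ, X ≠ 0 ∧ c = trNorm (φ X) / trNorm X} := by
  refine ⟨∑ c, ∑ c', trNorm (φ (single c c' 1)), ?_⟩
  rintro _ ⟨X, hX, rfl⟩
  rw [div_le_iff₀ (trNorm_pos hX), Finset.sum_mul, map_eq_sum_smul_single]
  refine (trNorm_sum_le _ _).trans (Finset.sum_le_sum fun c _ => ?_)
  rw [Finset.sum_mul]
  refine (trNorm_sum_le _ _).trans (Finset.sum_le_sum fun c' _ => ?_)
  refine (trNorm_smul_le _ _).trans ?_
  rw [mul_comm]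
  exact mul_le_mul_of_nonneg_left (norm_apply_le_trNorm X c c') (trNorm_nonneg _)

lemma trNorm_map_le (φ : Matrix γ γ ℂ →ₗ[ℂ] Matrix δ δ ℂ) (X : Matrix γ γ ℂ) :
    trNorm (φ X) ≤ norm11 φ * trNorm X := by
  rcases eq_or_ne X 0 with rfl | hX
  · simp [trNorm_zero]
  · rw [← div_le_iff₀ (trNorm_pos hX)]
    exact le_csSup (bddAbove_norm11 φ) ⟨X, hX, rfl⟩

lemma trNorm_amp_le {α : Type*} [Fintype α] [DecidableEq α]
    (φ : Matrix γ γ ℂ →ₗ[ℂ] Matrix δ δ ℂ) (X : Matrix (α × γ) (α × γ) ℂ) :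
    trNorm (amp φ X) ≤ Fintype.card γ * norm11 φ * trNorm X := by
  have hsingle : ∀ c c', trNorm (φ (single c c' 1)) ≤ norm11 φ := fun c c' =>
    (trNorm_map_le φ _).trans (mul_le_of_le_one_right (norm11_nonneg φ) (trNorm_single_one_le c c'))
  calc trNorm (amp φ X)
      ≤ ∑ c, ∑ c', trNorm (X.submatrix (·, c) (·, c')) * trNorm (φ (single c c' 1)) := by
        rw [amp_eq_sum_kronecker]
        exact (trNorm_sum_le _ _).trans <| Finset.sum_le_sum fun c _ =>
          (trNorm_sum_le _ _).trans <| Finset.sum_le_sum fun c' _ => trNorm_kronecker_le _ _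
    _ ≤ (∑ c, ∑ c', trNorm (X.submatrix (·, c) (·, c'))) * norm11 φ := by
        simp only [Finset.sum_mul]
        gcongr with c _ c' _
        · exact trNorm_nonneg _
        · exact hsingle c c'
    _ ≤ Fintype.card γ * trNorm X * norm11 φ := by
        gcongr
        · exact norm11_nonneg φ
        · exact sum_trNorm_submatrix_le X
    _ = Fintype.card γ * norm11 φ * trNorm X := by ring

end CompletelyBounded

/-- `‖φ‖_cb ≤ d ‖φ‖_{1→1}` for every linear map between matrix spaces. -/
theorem stmt5 {γ δ : Type*} [Fintype γ] [DecidableEq γ] [Fintype δ] [DecidableEq δ]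
    (φ : Matrix γ γ ℂ →ₗ[ℂ] Matrix δ δ ℂ) :
    normCB (⇑φ) ≤ (Fintype.card γ : ℝ) * norm11 (⇑φ) := by
  refine Real.sSup_le ?_ (mul_nonneg (Nat.cast_nonneg _) (norm11_nonneg φ))
  rintro _ ⟨k, X, hX, rfl⟩
  rw [div_le_iff₀ (trNorm_pos hX)]
  exact trNorm_amp_le φ X
end
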